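/- arXiv:1504.04654 — 7 statements merged into one kernel-verified Lean document; each statement's English description precedes it below -/
import Mathlib

section
/- Let N ≥ 1 be an integer, let ε > 0 and let r₁, …, r_N > 0. Then there exists a finite subset S of the solid ellipsoid E(r) = { a ∈ ℝᴺ : Σₙ₌₁ᴺ aₙ²/rₙ² ≤ 1 } such that any two distinct points of S are at Euclidean distance at least 2ε and the cardinality of S satisfies |S| ≥ (Πₙ₌₁ᴺ rₙ)/(2ε)ᴺ. -/
/-!
A maximal `2ε`-separated subset `S` of the ellipsoid `E(r)` is finite, as `E(r)` is compact, and
it is a `2ε`-cover of `E(r)`: a point farther than `2ε` from all of `S` could be added to it.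
So the closed balls of radius `2ε` about `S` cover `E(r)`, and with `B` the closed unit ball,
`(∏ rₙ) · vol B = vol E(r) ≤ |S| · (2ε)ᴺ · vol B`.
The volume of `E(r)` comes from writing it as the preimage of `B` under `a ↦ (aₙ / rₙ)ₙ`.
-/

open Metric Finset MeasureTheory
open scoped NNReal ENNReal

namespace Metric

variable {X : Type*}

lemma IsSeparated.lt_dist [PseudoMetricSpace X] {ε : ℝ≥0} {s : Set X} (hs : IsSeparated ε s)
    {x y : X} (hx : x ∈ s) (hy : y ∈ s) (hxy : x ≠ y) : ε < dist x y := by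
  have h : (ε : ℝ≥0∞) < edist x y := hs hx hy hxy
  rw [edist_nndist, ENNReal.coe_lt_coe] at h
  exact_mod_cast h

variable [PseudoEMetricSpace X] {ε : ℝ≥0} {A : Set X}

lemma packingNumber_ne_top_of_totallyBounded (hε : ε ≠ 0) (hA : TotallyBounded A) :
    packingNumber ε A ≠ ⊤ := by
  obtain ⟨C, -, hCfin, hC⟩ :=
    exists_finite_isCover_of_totallyBounded (ε := ε / 2) (by simpa) hA
  refine ne_top_of_le_ne_top hCfin.encard_lt_top.ne ?_
  calc packingNumber ε A = packingNumber (2 * (ε / 2)) A := by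
        rw [mul_div_cancel₀ _ two_ne_zero]
    _ ≤ externalCoveringNumber (ε / 2) A := packingNumber_two_mul_le_externalCoveringNumber _ _
    _ ≤ C.encard := hC.externalCoveringNumber_le_encard

lemma exists_finite_isSeparated_isCover_of_totallyBounded (hε : ε ≠ 0) (hA : TotallyBounded A) :
    ∃ C ⊆ A, C.Finite ∧ IsSeparated ε C ∧ IsCover ε A C := by
  have h := packingNumber_ne_top_of_totallyBounded hε hA
  refine ⟨maximalSeparatedSet ε A, maximalSeparatedSet_subset, ?_,
    isSeparated_maximalSeparatedSet, isCover_maximalSeparatedSet h⟩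
  rw [← Set.encard_ne_top_iff, encard_maximalSeparatedSet h]
  exact h

end Metric

namespace MeasureTheory.Measure

variable {E : Type*} [NormedAddCommGroup E] [NormedSpace ℝ E] [MeasurableSpace E] [BorelSpace E]
  [FiniteDimensional ℝ E] (μ : Measure E) [μ.IsAddHaarMeasure]

lemma addHaar_le_card_mul_of_isCover {ε : ℝ≥0} {A : Set E} {C : Finset E}
    (hC : IsCover ε A C) :
    μ A ≤ #C * ENNReal.ofReal ((ε : ℝ) ^ Module.finrank ℝ E) * μ (closedBall 0 1) := by
  rw [isCover_iff_subset_iUnion_closedBall] at hC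
  calc μ A ≤ μ (⋃ x ∈ C, closedBall x ε) := measure_mono (by simpa using hC)
    _ ≤ ∑ x ∈ C, μ (closedBall x ε) := measure_biUnion_finset_le _ _
    _ = _ := by simp [addHaar_closedBall' μ _ ε.coe_nonneg, mul_assoc]

end MeasureTheory.Measure

section Ellipsoid

variable {ι : Type*} [Fintype ι] [DecidableEq ι]

def ellipsoid (r : ι → ℝ) : Set (EuclideanSpace ℝ ι) := {a | ∑ i, a i ^ 2 / r i ^ 2 ≤ 1}

lemma ellipsoid_eq_preimage_closedBall (r : ι → ℝ) :
    ellipsoid r = Matrix.toEuclideanLin (Matrix.diagonal r⁻¹) ⁻¹' closedBall 0 1 := by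
  ext a
  simp [ellipsoid, EuclideanSpace.norm_eq, Real.sqrt_le_one, Matrix.mulVec_diagonal,
    div_eq_inv_mul, mul_pow]

lemma det_toEuclideanLin_diagonal (d : ι → ℝ) :
    LinearMap.det (Matrix.toEuclideanLin (Matrix.diagonal d)) = ∏ i, d i := by
  rw [Matrix.toEuclideanLin, LinearMap.det_toLpLin, Matrix.det_diagonal]

variable {r : ι → ℝ}

lemma isCompact_ellipsoid (hr : ∀ i, r i ≠ 0) : IsCompact (ellipsoid r) := by
  have hdet : LinearMap.det (Matrix.toEuclideanLin (Matrix.diagonal r⁻¹)) ≠ 0 := by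
    simpa [det_toEuclideanLin_diagonal, prod_ne_zero_iff] using hr
  rw [ellipsoid_eq_preimage_closedBall]
  exact (LinearMap.equivOfDetNeZero _ hdet).toContinuousLinearEquiv.toHomeomorph
    |>.isCompact_preimage.2 (isCompact_closedBall 0 1)

lemma volume_ellipsoid (hr : ∀ i, r i ≠ 0) :
    volume (ellipsoid r) =
      ENNReal.ofReal |∏ i, r i| * volume (closedBall (0 : EuclideanSpace ℝ ι) 1) := by
  have hdet : LinearMap.det (Matrix.toEuclideanLin (Matrix.diagonal r⁻¹)) ≠ 0 := by
    simpa [det_toEuclideanLin_diagonal, prod_ne_zero_iff] using hr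
  rw [ellipsoid_eq_preimage_closedBall, Measure.addHaar_preimage_linearMap _ hdet,
    det_toEuclideanLin_diagonal]
  simp [prod_inv_distrib]

end Ellipsoid

theorem capacity_lower_bound_general (N : ℕ) (ε : ℝ) (hε : 0 < ε)
    (r : Fin N → ℝ) (hr : ∀ n, 0 < r n) :
    ∃ S : Finset (EuclideanSpace ℝ (Fin N)),
      (∀ a ∈ S, ∑ n, (a n) ^ 2 / (r n) ^ 2 ≤ 1) ∧
      (∀ a ∈ S, ∀ b ∈ S, a ≠ b → 2 * ε ≤ dist a b) ∧
      (∏ n, r n) / (2 * ε) ^ N ≤ (S.card : ℝ) := by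
  have hr₀ : ∀ n, r n ≠ 0 := fun n ↦ (hr n).ne'
  let δ : ℝ≥0 := ⟨2 * ε, by positivity⟩
  have hδ : δ ≠ 0 := NNReal.coe_ne_zero.1 (mul_pos two_pos hε).ne'
  obtain ⟨C, hCE, hCfin, hCsep, hCcov⟩ :=
    exists_finite_isSeparated_isCover_of_totallyBounded hδ (isCompact_ellipsoid hr₀).totallyBounded
  refine ⟨hCfin.toFinset, fun a ha ↦ hCE (hCfin.mem_toFinset.1 ha), fun a ha b hb hab ↦
    (hCsep.lt_dist (hCfin.mem_toFinset.1 ha) (hCfin.mem_toFinset.1 hb) hab).le, ?_⟩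
  have hvol := Measure.addHaar_le_card_mul_of_isCover volume (C := hCfin.toFinset)
    (by rwa [hCfin.coe_toFinset])
  rw [volume_ellipsoid hr₀, finrank_euclideanSpace_fin, abs_of_pos (prod_pos fun n _ ↦ hr n),
    ENNReal.mul_le_mul_iff_left (measure_closedBall_pos _ _ one_pos).ne'
      measure_closedBall_lt_top.ne] at hvol
  rw [div_le_iff₀ (by positivity), ← ENNReal.ofReal_le_ofReal_iff (by positivity),
    ENNReal.ofReal_mul (by positivity), ENNReal.ofReal_natCast]
  exact hvol

/-- There exists a `2ε`-separated subset `S` of the solid ellipsoid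
`{a : Σ aₙ²/rₙ² ≤ 1}` in `ℝᴺ` with `|S| ≥ (Π rₙ)/(2ε)ᴺ`. -/
theorem capacity_lower_bound (N : ℕ) (hN : 1 ≤ N) (ε : ℝ) (hε : 0 < ε)
    (r : Fin N → ℝ) (hr : ∀ n, 0 < r n) :
    ∃ S : Finset (EuclideanSpace ℝ (Fin N)),
      (∀ a ∈ S, ∑ n, (a n) ^ 2 / (r n) ^ 2 ≤ 1) ∧
      (∀ a ∈ S, ∀ b ∈ S, a ≠ b → 2 * ε ≤ dist a b) ∧
      (∏ n, r n) / (2 * ε) ^ N ≤ (S.card : ℝ) :=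
  capacity_lower_bound_general N ε hε r hr
end

section
/- Let N ≥ 1 be an integer, let E, ε > 0 and let 0 ≤ δ < 1. Let a⁽¹⁾, …, a⁽ᴹ⁾ be distinct points of the closed Euclidean ball of radius √E centered at the origin in ℝᴺ, and suppose their cumulative error measure satisfies Δ ≤ δ. Then M ≤ (1/(1 − δ)) · (1 + √E/ε)ᴺ. -/
/-!
The regions `Sⁱ \ Dⁱ`, on which minimum-distance decoding is unambiguous, are pairwise disjoint
and lie in the ball of radius `√E + ε`. Their total volume is `M (1 - Δ) vol(Sⁱ)`, so comparing
volumes and using that Lebesgue measure scales like `rᴺ` gives `M (1 - Δ) ≤ ((√E + ε) / ε)ᴺ`.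
-/

open Metric MeasureTheory

/-- The error region `Dⁱ` of the `i`-th codeword under minimum-distance decoding:
the points of the closed `ε`-ball `Sⁱ` around `a i` that are at least as close to some
other codeword. -/
def errRegion {N M : ℕ} (ε : ℝ) (a : Fin M → EuclideanSpace ℝ (Fin N)) (i : Fin M) :
    Set (EuclideanSpace ℝ (Fin N)) :=
  {x | x ∈ closedBall (a i) ε ∧ ∃ j : Fin M, j ≠ i ∧ dist x (a j) ≤ dist x (a i)}

/-- The cumulative error measure `Δ = (1/M) Σᵢ vol(Dⁱ)/vol(Sⁱ)`. -/
noncomputable def cumErr {N M : ℕ} (ε : ℝ) (a : Fin M → EuclideanSpace ℝ (Fin N)) : ℝ :=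
  (1 / (M : ℝ)) * ∑ i : Fin M,
    (volume (errRegion ε a i)).toReal / (volume (closedBall (a i) ε)).toReal

open Function

lemma measureReal_closedBall_pos {X : Type*} [PseudoMetricSpace X] [ProperSpace X]
    [MeasurableSpace X] (μ : Measure X) [μ.IsOpenPosMeasure] [IsFiniteMeasureOnCompacts μ]
    (x : X) {r : ℝ} (hr : 0 < r) : 0 < μ.real (closedBall x r) :=
  ENNReal.toReal_pos (measure_closedBall_pos μ x hr).ne' measure_closedBall_lt_top.ne

section

variable {N M : ℕ} (ε : ℝ) (a : Fin M → EuclideanSpace ℝ (Fin N))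

lemma errRegion_subset_closedBall (i : Fin M) : errRegion ε a i ⊆ closedBall (a i) ε :=
  fun _ hx => hx.1

lemma measurableSet_errRegion (i : Fin M) : MeasurableSet (errRegion ε a i) := by
  have : errRegion ε a i =
      closedBall (a i) ε ∩ ⋃ j, ⋃ (_ : j ≠ i), {x | dist x (a j) ≤ dist x (a i)} := by
    ext; simp [errRegion]
  rw [this]
  exact measurableSet_closedBall.inter <| .iUnion fun j => .iUnion fun _ =>
    (isClosed_le (by fun_prop) (by fun_prop)).measurableSet

def decodingRegion (i : Fin M) : Set (EuclideanSpace ℝ (Fin N)) :=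
  closedBall (a i) ε \ errRegion ε a i

lemma pairwise_disjoint_decodingRegion : Pairwise (Disjoint on (decodingRegion ε a)) := by
  intro i j hij
  rw [Function.onFun, Set.disjoint_left]
  rintro x ⟨hxi, hi⟩ ⟨hxj, hj⟩
  rcases le_total (dist x (a i)) (dist x (a j)) with h | h
  · exact hj ⟨hxj, i, hij, h⟩
  · exact hi ⟨hxi, j, hij.symm, h⟩

lemma decodingRegion_subset_closedBall_zero {R : ℝ} {i : Fin M} (hR : a i ∈ closedBall 0 R) :
    decodingRegion ε a i ⊆ closedBall 0 (R + ε) :=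
  Set.sdiff_subset.trans <| closedBall_subset_closedBall' <| by
    rw [mem_closedBall] at hR; linarith

lemma measureReal_decodingRegion (i : Fin M) :
    volume.real (decodingRegion ε a i) =
      volume.real (closedBall (a i) ε) - volume.real (errRegion ε a i) :=
  measureReal_sdiff (errRegion_subset_closedBall ε a i) (measurableSet_errRegion ε a i)
    measure_closedBall_lt_top.ne

lemma sum_measureReal_decodingRegion_le {R : ℝ} (hball : ∀ i, a i ∈ closedBall 0 R) :
    ∑ i, volume.real (decodingRegion ε a i) ≤
      volume.real (closedBall (0 : EuclideanSpace ℝ (Fin N)) (R + ε)) := by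
  rw [← measureReal_iUnion_fintype (pairwise_disjoint_decodingRegion ε a)
    (fun i => measurableSet_closedBall.diff (measurableSet_errRegion ε a i))
    fun i => measure_ne_top_of_subset Set.sdiff_subset measure_closedBall_lt_top.ne]
  exact measureReal_mono
    (Set.iUnion_subset fun i => decodingRegion_subset_closedBall_zero ε a (hball i))
    measure_closedBall_lt_top.ne

lemma sum_measureReal_errRegion (hε : 0 < ε) :
    ∑ i, volume.real (errRegion ε a i) =
      M * volume.real (closedBall (0 : EuclideanSpace ℝ (Fin N)) ε) * cumErr ε a := by
  have hs := (measureReal_closedBall_pos volume (0 : EuclideanSpace ℝ (Fin N)) hε).ne'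
  rcases Nat.eq_zero_or_pos M with rfl | _
  · simp
  simp only [cumErr, ← measureReal_def, Measure.addHaar_real_closedBall_center, ← Finset.sum_div]
  field_simp

theorem card_mul_one_sub_cumErr_le (hε : 0 < ε) {R : ℝ} (hR : 0 ≤ R)
    (hball : ∀ i, a i ∈ closedBall 0 R) : (M : ℝ) * (1 - cumErr ε a) ≤ (1 + R / ε) ^ N := by
  set s := volume.real (closedBall (0 : EuclideanSpace ℝ (Fin N)) ε)
  have hs : 0 < s := measureReal_closedBall_pos volume 0 hε
  have hscale : volume.real (closedBall (0 : EuclideanSpace ℝ (Fin N)) (R + ε)) =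
      (1 + R / ε) ^ N * s := by
    simp only [s, Measure.addHaar_real_closedBall' _ _ hε.le,
      Measure.addHaar_real_closedBall' _ _ (add_nonneg hR hε.le), finrank_euclideanSpace_fin]
    rw [← mul_assoc, ← mul_pow, one_add_mul, div_mul_cancel₀ R hε.ne', add_comm]
  refine le_of_mul_le_mul_right ?_ hs
  calc (M : ℝ) * (1 - cumErr ε a) * s = ∑ i, volume.real (decodingRegion ε a i) := by
        simp only [measureReal_decodingRegion, Measure.addHaar_real_closedBall_center,
          Finset.sum_sub_distrib, sum_measureReal_errRegion ε a hε, Finset.sum_const,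
          Finset.card_univ, Fintype.card_fin, nsmul_eq_mul]
        ring
    _ ≤ volume.real (closedBall (0 : EuclideanSpace ℝ (Fin N)) (R + ε)) :=
        sum_measureReal_decodingRegion_le ε a hball
    _ = (1 + R / ε) ^ N * s := hscale

end

theorem eps_delta_capacity_upper_bound_general (N : ℕ) (E ε δ : ℝ)
    (hε : 0 < ε) (hδ1 : δ < 1)
    (M : ℕ) (a : Fin M → EuclideanSpace ℝ (Fin N))
    (hball : ∀ i, a i ∈ closedBall (0 : EuclideanSpace ℝ (Fin N)) (Real.sqrt E))
    (herr : cumErr ε a ≤ δ) :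
    (M : ℝ) ≤ 1 / (1 - δ) * (1 + Real.sqrt E / ε) ^ N := by
  rw [one_div_mul_eq_div, le_div_iff₀ (sub_pos.2 hδ1)]
  calc (M : ℝ) * (1 - δ) ≤ M * (1 - cumErr ε a) := by gcongr
    _ ≤ (1 + Real.sqrt E / ε) ^ N :=
      card_mul_one_sub_cumErr_le ε a hε (Real.sqrt_nonneg E) hball

/-- If `a 1, …, a M` are distinct points of the closed ball of radius `√E`
in `ℝᴺ` with cumulative error measure `Δ ≤ δ < 1`, then `M ≤ (1/(1−δ))·(1 + √E/ε)ᴺ`. -/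
theorem eps_delta_capacity_upper_bound (N : ℕ) (hN : 1 ≤ N) (E ε δ : ℝ)
    (hE : 0 < E) (hε : 0 < ε) (hδ0 : 0 ≤ δ) (hδ1 : δ < 1)
    (M : ℕ) (a : Fin M → EuclideanSpace ℝ (Fin N))
    (hinj : Function.Injective a)
    (hball : ∀ i, a i ∈ closedBall (0 : EuclideanSpace ℝ (Fin N)) (Real.sqrt E))
    (herr : cumErr ε a ≤ δ) :
    (M : ℝ) ≤ 1 / (1 - δ) * (1 + Real.sqrt E / ε) ^ N :=
  eps_delta_capacity_upper_bound_general N E ε δ hε hδ1 M a hball herr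
end

section
/- Let N ≥ 1 be an integer, let ε > 0 and let r₁, …, r_N > 0. If C is a finite subset of ℝᴺ such that every point of the solid ellipsoid E(r) = { a ∈ ℝᴺ : Σₙ₌₁ᴺ aₙ²/rₙ² ≤ 1 } lies within Euclidean distance ε of some point of C, then the cardinality of C satisfies |C| ≥ (Πₙ₌₁ᴺ rₙ)/εᴺ. -/
/-!
Scaling the closed unit ball coordinatewise by `r` lands inside the ellipsoid and multiplies
volumes by `|∏ rₙ|`, while `|C|` balls of radius `ε` have total volume `|C| εᴺ` times that of the
unit ball. Comparing the two volumes gives `∏ rₙ ≤ |C| εᴺ`.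
-/

open Metric Finset MeasureTheory Module

section VolumeComparison

variable {E : Type*} [NormedAddCommGroup E] [NormedSpace ℝ E] [FiniteDimensional ℝ E]

theorem MeasureTheory.Measure.addHaar_le_card_mul_of_subset_biUnion_closedBall
    [MeasurableSpace E] [BorelSpace E] (μ : Measure E) [μ.IsAddHaarMeasure] {S : Set E}
    {C : Finset E} {ε : ℝ} (hε : 0 ≤ ε) (hS : S ⊆ ⋃ c ∈ C, closedBall c ε) :
    μ S ≤ #C * (ENNReal.ofReal (ε ^ finrank ℝ E) * μ (ball 0 1)) :=
  calc μ S ≤ ∑ c ∈ C, μ (closedBall c ε) :=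
        (measure_mono hS).trans (measure_biUnion_finset_le _ _)
    _ = #C * (ENNReal.ofReal (ε ^ finrank ℝ E) * μ (ball 0 1)) := by
      simp only [Measure.addHaar_closedBall μ _ hε, sum_const, nsmul_eq_mul]

theorem LinearMap.abs_det_le_card_mul_pow_of_image_closedBall_subset (L : E →ₗ[ℝ] E)
    {C : Finset E} {ε : ℝ} (hε : 0 ≤ ε) (hL : L '' closedBall 0 1 ⊆ ⋃ c ∈ C, closedBall c ε) :
    |LinearMap.det L| ≤ #C * ε ^ finrank ℝ E := by
  borelize E
  let μ : Measure E := Measure.addHaar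
  have hvol : ENNReal.ofReal |LinearMap.det L| * μ (ball 0 1)
      ≤ ENNReal.ofReal (#C * ε ^ finrank ℝ E) * μ (ball 0 1) :=
    calc ENNReal.ofReal |LinearMap.det L| * μ (ball 0 1) = μ (L '' closedBall 0 1) := by
          rw [Measure.addHaar_image_linearMap, Measure.addHaar_closedBall μ 0 zero_le_one, one_pow,
            ENNReal.ofReal_one, one_mul]
      _ ≤ #C * (ENNReal.ofReal (ε ^ finrank ℝ E) * μ (ball 0 1)) :=
          Measure.addHaar_le_card_mul_of_subset_biUnion_closedBall μ hε hL
      _ = ENNReal.ofReal (#C * ε ^ finrank ℝ E) * μ (ball 0 1) := by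
          rw [ENNReal.ofReal_mul (by positivity), ENNReal.ofReal_natCast, mul_assoc]
  rw [ENNReal.mul_le_mul_iff_left (measure_ball_pos μ 0 one_pos).ne' measure_ball_lt_top.ne,
    ENNReal.ofReal_le_ofReal_iff (by positivity)] at hvol
  exact hvol

end VolumeComparison

theorem Matrix.toEuclideanLin_diagonal_image_closedBall_subset {ι : Type*} [Fintype ι]
    [DecidableEq ι] (r : ι → ℝ) :
    toEuclideanLin (diagonal r) '' closedBall 0 1 ⊆ {x | ∑ n, x n ^ 2 / r n ^ 2 ≤ 1} := by
  rintro _ ⟨y, hy, rfl⟩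
  have hy : ∑ n, y n ^ 2 ≤ 1 := by
    simpa [EuclideanSpace.norm_eq, Real.sqrt_le_one] using hy
  refine le_trans (sum_le_sum fun n _ => ?_) hy
  -- `(rₙ yₙ)² / rₙ² ≤ yₙ²` holds even for `rₙ = 0`, where the left side is `0 / 0 = 0`.
  simp only [toLpLin_apply, WithLp.ofLp_toLp, mulVec_diagonal, mul_pow]
  rcases eq_or_ne (r n) 0 with h | h
  · simp [h, sq_nonneg]
  · rw [mul_div_cancel_left₀ _ (pow_ne_zero 2 h)]

theorem entropy_lower_bound_general (N : ℕ) (ε : ℝ) (hε : 0 < ε)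
    (r : Fin N → ℝ)
    (C : Finset (EuclideanSpace ℝ (Fin N)))
    (hcov : ∀ x : EuclideanSpace ℝ (Fin N), (∑ n, (x n) ^ 2 / (r n) ^ 2 ≤ 1) →
      ∃ c ∈ C, dist x c ≤ ε) :
    (∏ n, r n) / ε ^ N ≤ (C.card : ℝ) := by
  have hcover : Matrix.toEuclideanLin (Matrix.diagonal r) '' closedBall 0 1
      ⊆ ⋃ c ∈ C, closedBall c ε := fun x hx => by
    obtain ⟨c, hc, hxc⟩ := hcov x (Matrix.toEuclideanLin_diagonal_image_closedBall_subset r hx)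
    exact Set.mem_biUnion hc hxc
  have hdet := LinearMap.abs_det_le_card_mul_pow_of_image_closedBall_subset _ hε.le hcover
  rw [LinearMap.det_toLpLin, Matrix.det_diagonal, finrank_euclideanSpace_fin] at hdet
  rw [div_le_iff₀ (by positivity)]
  exact (le_abs_self _).trans hdet

/-- If a finite set `C ⊆ ℝᴺ` is an `ε`-cover of the solid ellipsoid
`{a : Σ aₙ²/rₙ² ≤ 1}`, then `|C| ≥ (Π rₙ)/εᴺ`. -/
theorem entropy_lower_bound (N : ℕ) (hN : 1 ≤ N) (ε : ℝ) (hε : 0 < ε)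
    (r : Fin N → ℝ) (hr : ∀ n, 0 < r n)
    (C : Finset (EuclideanSpace ℝ (Fin N)))
    (hcov : ∀ x : EuclideanSpace ℝ (Fin N), (∑ n, (x n) ^ 2 / (r n) ^ 2 ≤ 1) →
      ∃ c ∈ C, dist x c ≤ ε) :
    (∏ n, r n) / ε ^ N ≤ (C.card : ℝ) :=
  entropy_lower_bound_general N ε hε r C hcov
end

section
/- Let V be a real inner product space, let ε > 0, let m ≥ 1 be an integer, and let a⁽¹⁾, …, a⁽ᵐ⁾ be points of V such that ‖a⁽ʲ⁾ − a⁽ᵏ⁾‖ ≥ 2ε for all j ≠ k. Then for every point x ∈ V, Σ_{j=1}^{m} ‖x − a⁽ʲ⁾‖² ≥ 2ε²(m − 1). -/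
/-!
Put `vⱼ = x − a⁽ʲ⁾`. Expanding squares gives
`Σⱼ Σₖ ‖vⱼ − vₖ‖² = 2m Σⱼ ‖vⱼ‖² − 2‖Σⱼ vⱼ‖² ≤ 2m Σⱼ ‖vⱼ‖²`, while `vⱼ − vₖ = a⁽ᵏ⁾ − a⁽ʲ⁾`, so
the left side is at least `m(m − 1)(2ε)²`. Dividing by `2m` gives the bound.
-/

open Finset

section InnerProductSpace

variable {ι F : Type*} [Fintype ι] [NormedAddCommGroup F] [InnerProductSpace ℝ F]

theorem sum_sum_norm_sub_sq (v : ι → F) :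
    ∑ j, ∑ k, ‖v j - v k‖ ^ 2 =
      2 * Fintype.card ι * ∑ j, ‖v j‖ ^ 2 - 2 * ‖∑ j, v j‖ ^ 2 := by
  have sum_sum_inner : ∑ j, ∑ k, inner ℝ (v j) (v k) = ‖∑ j, v j‖ ^ 2 := by
    rw [← real_inner_self_eq_norm_sq, sum_inner]
    simp only [inner_sum]
  simp only [norm_sub_sq_real, sum_add_distrib, sum_sub_distrib, ← mul_sum, sum_const,
    card_univ, nsmul_eq_mul, sum_sum_inner]
  ring

theorem sum_sum_norm_sub_sq_le (v : ι → F) :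
    ∑ j, ∑ k, ‖v j - v k‖ ^ 2 ≤ 2 * Fintype.card ι * ∑ j, ‖v j‖ ^ 2 := by
  rw [sum_sum_norm_sub_sq]
  linarith [sq_nonneg ‖∑ j, v j‖]

end InnerProductSpace

theorem card_mul_card_sub_one_mul_sq_le_sum_sum_norm_sub_sq {ι E : Type*} [Fintype ι]
    [SeminormedAddCommGroup E] (a : ι → E) {d : ℝ} (hd : 0 ≤ d)
    (hsep : ∀ j k, j ≠ k → d ≤ ‖a j - a k‖) :
    Fintype.card ι * (Fintype.card ι - 1) * d ^ 2 ≤ ∑ j, ∑ k, ‖a j - a k‖ ^ 2 := by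
  classical
  have row_ge (j : ι) : (Fintype.card ι - 1) * d ^ 2 ≤ ∑ k, ‖a j - a k‖ ^ 2 := by
    rw [← add_sum_erase _ _ (mem_univ j), sub_self, norm_zero, zero_pow two_ne_zero, zero_add]
    calc (Fintype.card ι - 1) * d ^ 2 = ∑ _k ∈ univ.erase j, d ^ 2 := by
          rw [sum_const, card_erase_of_mem (mem_univ j), nsmul_eq_mul, card_univ,
            Nat.cast_pred (Fintype.card_pos_iff.2 ⟨j⟩)]
      _ ≤ ∑ k ∈ univ.erase j, ‖a j - a k‖ ^ 2 := sum_le_sum fun k hk =>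
          pow_le_pow_left₀ hd (hsep j k (ne_of_mem_erase hk).symm) 2
  calc Fintype.card ι * (Fintype.card ι - 1) * d ^ 2
      = ∑ _j : ι, (Fintype.card ι - 1) * d ^ 2 := by
        rw [sum_const, card_univ, nsmul_eq_mul, mul_assoc]
    _ ≤ _ := sum_le_sum fun j _ => row_ge j

theorem sum_sq_dist_ge_general {V : Type*} [NormedAddCommGroup V] [InnerProductSpace ℝ V]
    (ε : ℝ) (hε : 0 < ε) (m : ℕ) (a : Fin m → V)
    (hsep : ∀ j k : Fin m, j ≠ k → 2 * ε ≤ ‖a j - a k‖) (x : V) :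
    2 * ε ^ 2 * ((m : ℝ) - 1) ≤ ∑ j : Fin m, ‖x - a j‖ ^ 2 := by
  have hsep' : ∀ j k : Fin m, j ≠ k → 2 * ε ≤ ‖(x - a j) - (x - a k)‖ := fun j k hjk => by
    rw [sub_sub_sub_cancel_left]
    exact hsep k j hjk.symm
  have lower := card_mul_card_sub_one_mul_sq_le_sum_sum_norm_sub_sq (fun j => x - a j)
    (by positivity) hsep'
  have upper := sum_sum_norm_sub_sq_le fun j => x - a j
  simp only [Fintype.card_fin] at lower upper
  rcases m.eq_zero_or_pos with rfl | hm
  · simp only [Nat.cast_zero, univ_eq_empty, sum_empty]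
    nlinarith
  · refine le_of_mul_le_mul_left ?_ (by positivity : (0 : ℝ) < 2 * m)
    linarith

/-- equation (34) of the paper: if `a⁽¹⁾, …, a⁽ᵐ⁾` are points of a real inner
product space with `‖a⁽ʲ⁾ − a⁽ᵏ⁾‖ ≥ 2ε` for `j ≠ k`, then for every `x`,
`Σⱼ ‖x − a⁽ʲ⁾‖² ≥ 2ε²(m − 1)`. -/
theorem sum_sq_dist_ge {V : Type*} [NormedAddCommGroup V] [InnerProductSpace ℝ V]
    (ε : ℝ) (hε : 0 < ε) (m : ℕ) (hm : 1 ≤ m) (a : Fin m → V)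
    (hsep : ∀ j k : Fin m, j ≠ k → 2 * ε ≤ ‖a j - a k‖) (x : V) :
    2 * ε ^ 2 * ((m : ℝ) - 1) ≤ ∑ j : Fin m, ‖x - a j‖ ^ 2 :=
  sum_sq_dist_ge_general ε hε m a hsep x
end

section
/- Let V be a real inner product space, let ε > 0, and let a⁽¹⁾, …, a⁽ᴹ⁾ be points of V such that ‖a⁽ʲ⁾ − a⁽ᵏ⁾‖ ≥ 2ε for all j ≠ k. Define γ(x) = max{0, 1 − x²/(2ε²)} for x ≥ 0. Then for every point a ∈ V, Σ_{j=1}^{M} γ(‖a − a⁽ʲ⁾‖) ≤ 1. -/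
/-!
Write `b j = x - a j` and `c j = γ(‖b j‖)`. Where `c j > 0` we have `‖b j‖² = 2ε²(1 - c j)`, so
the separation `‖b j - b k‖² ≥ 4ε²` gives `⟪b j, b k⟫ ≤ -ε²(c j + c k)` for `j ≠ k`. Inserting
these bounds into `0 ≤ ‖∑ c j • b j‖²` yields `0 ≤ 2ε² (∑ c j²)(1 - ∑ c j)`, hence `∑ c j ≤ 1`.
-/

open Finset RealInnerProductSpace

noncomputable def gamma (ε r : ℝ) : ℝ := max 0 (1 - r ^ 2 / (2 * ε ^ 2))

lemma gamma_nonneg (ε r : ℝ) : 0 ≤ gamma ε r := le_max_left _ _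

lemma sq_eq_of_gamma_pos {ε r : ℝ} (hε : ε ≠ 0) (h : 0 < gamma ε r) :
    r ^ 2 = 2 * ε ^ 2 * (1 - gamma ε r) := by
  have hpos : 0 < 1 - r ^ 2 / (2 * ε ^ 2) := by
    by_contra! hle
    exact h.ne' (max_eq_left hle)
  rw [gamma, max_eq_right hpos.le]
  field_simp
  ring

lemma gamma_sq_mul_sq (ε r : ℝ) (hε : ε ≠ 0) :
    gamma ε r ^ 2 * r ^ 2 = ε ^ 2 * (gamma ε r ^ 2 * (2 - 2 * gamma ε r)) := by
  rcases (gamma_nonneg ε r).eq_or_lt with h | h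
  · simp [← h]
  · rw [sq_eq_of_gamma_pos hε h]
    ring

lemma gamma_mul_gamma_mul_inner_le {V : Type*} [NormedAddCommGroup V] [InnerProductSpace ℝ V]
    {ε : ℝ} (hε : 0 < ε) {u v : V} (huv : 2 * ε ≤ ‖u - v‖) :
    gamma ε ‖u‖ * gamma ε ‖v‖ * ⟪u, v⟫ ≤
      ε ^ 2 * (gamma ε ‖u‖ * gamma ε ‖v‖ * (-gamma ε ‖u‖ - gamma ε ‖v‖)) := by
  rcases (gamma_nonneg ε ‖u‖).eq_or_lt with hu | hu
  · simp [← hu]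
  rcases (gamma_nonneg ε ‖v‖).eq_or_lt with hv | hv
  · simp [← hv]
  have hsq : (2 * ε) ^ 2 ≤ ‖u - v‖ ^ 2 := pow_le_pow_left₀ (by positivity) huv 2
  have hinner : ⟪u, v⟫ ≤ ε ^ 2 * (-gamma ε ‖u‖ - gamma ε ‖v‖) := by
    rw [norm_sub_sq_real, sq_eq_of_gamma_pos hε.ne' hu, sq_eq_of_gamma_pos hε.ne' hv] at hsq
    linarith
  calc gamma ε ‖u‖ * gamma ε ‖v‖ * ⟪u, v⟫
      ≤ gamma ε ‖u‖ * gamma ε ‖v‖ * (ε ^ 2 * (-gamma ε ‖u‖ - gamma ε ‖v‖)) := by gcongr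
    _ = _ := by ring

lemma sum_sum_mul_inner_nonneg {ι V : Type*} [NormedAddCommGroup V] [InnerProductSpace ℝ V]
    (s : Finset ι) (c : ι → ℝ) (b : ι → V) :
    0 ≤ ∑ j ∈ s, ∑ k ∈ s, c j * c k * ⟪b j, b k⟫ := by
  have h : ⟪∑ j ∈ s, c j • b j, ∑ k ∈ s, c k • b k⟫ = ∑ j ∈ s, ∑ k ∈ s, c j * c k * ⟪b j, b k⟫ := by
    simp_rw [sum_inner, inner_sum, real_inner_smul_left, real_inner_smul_right, mul_assoc]
  exact h ▸ real_inner_self_nonneg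

lemma sum_sum_mul_mul_ite_sub_sub {ι : Type*} [DecidableEq ι] (s : Finset ι) (c : ι → ℝ) :
    ∑ j ∈ s, ∑ k ∈ s, c j * c k * ((if j = k then 2 else 0) - c j - c k) =
      2 * ((∑ j ∈ s, c j ^ 2) * (1 - ∑ j ∈ s, c j)) := by
  have hrow : ∀ j ∈ s, ∑ k ∈ s, c j * c k * ((if j = k then 2 else 0) - c j - c k) =
      2 * c j ^ 2 - c j ^ 2 * ∑ k ∈ s, c k - c j * ∑ k ∈ s, c k ^ 2 := by
    intro j hj
    simp only [mul_sub, sum_sub_distrib, mul_ite, mul_zero, sum_ite_eq, if_pos hj, mul_sum]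
    ring_nf
  rw [sum_congr rfl hrow, sum_sub_distrib, sum_sub_distrib, ← mul_sum, ← sum_mul, ← sum_mul]
  ring

lemma sum_le_one_of_mul_one_sub_nonneg {ι : Type*} {s : Finset ι} {c : ι → ℝ}
    (hc : ∀ j ∈ s, 0 ≤ c j) (h : 0 ≤ (∑ j ∈ s, c j ^ 2) * (1 - ∑ j ∈ s, c j)) :
    ∑ j ∈ s, c j ≤ 1 := by
  by_contra! hS
  obtain ⟨j, hj, hcj⟩ := exists_ne_zero_of_sum_ne_zero (one_pos.trans hS).ne'
  have hQ : 0 < ∑ j ∈ s, c j ^ 2 :=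
    sum_pos' (fun j _ => sq_nonneg (c j)) ⟨j, hj, pow_pos ((hc j hj).lt_of_ne' hcj) 2⟩
  nlinarith

/-- equation (37) of the paper: if `a⁽¹⁾, …, a⁽ᴹ⁾` are points of a real inner
product space with pairwise distances at least `2ε`, and `γ(x) = max{0, 1 − x²/(2ε²)}`,
then for every point `a`, `Σⱼ γ(‖a − a⁽ʲ⁾‖) ≤ 1`. -/
theorem sum_gamma_le_one {V : Type*} [NormedAddCommGroup V] [InnerProductSpace ℝ V]
    (ε : ℝ) (hε : 0 < ε) (M : ℕ) (a : Fin M → V)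
    (hsep : ∀ j k : Fin M, j ≠ k → 2 * ε ≤ ‖a j - a k‖) (x : V) :
    ∑ j : Fin M, max 0 (1 - ‖x - a j‖ ^ 2 / (2 * ε ^ 2)) ≤ 1 := by
  set c : Fin M → ℝ := fun j => gamma ε ‖x - a j‖ with hc
  have hpair : ∀ j k, c j * c k * ⟪x - a j, x - a k⟫ ≤
      ε ^ 2 * (c j * c k * ((if j = k then 2 else 0) - c j - c k)) := by
    intro j k
    rcases eq_or_ne j k with rfl | hjk
    · rw [real_inner_self_eq_norm_sq, ← sq, hc, gamma_sq_mul_sq _ _ hε.ne', if_pos rfl]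
      exact le_of_eq (by ring)
    · rw [if_neg hjk, zero_sub]
      exact gamma_mul_gamma_mul_inner_le hε (by simpa using hsep k j hjk.symm)
  have hQS : 0 ≤ 2 * ε ^ 2 * ((∑ j, c j ^ 2) * (1 - ∑ j, c j)) :=
    calc 0 ≤ ∑ j, ∑ k, c j * c k * ⟪x - a j, x - a k⟫ := sum_sum_mul_inner_nonneg _ _ _
      _ ≤ ∑ j, ∑ k, ε ^ 2 * (c j * c k * ((if j = k then 2 else 0) - c j - c k)) :=
        sum_le_sum fun j _ => sum_le_sum fun k _ => hpair j k
      _ = _ := by simp only [← mul_sum, sum_sum_mul_mul_ite_sub_sub]; ring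
  exact sum_le_one_of_mul_one_sub_nonneg (fun j _ => gamma_nonneg _ _)
    ((mul_nonneg_iff_of_pos_left (by positivity)).mp hQS)
end

section
/- For each integer m ≥ 1, let λ⁽ᵐ⁾ : {1, 2, 3, …} → ℝ be a nonincreasing sequence with 0 < λ⁽ᵐ⁾ₙ ≤ 1 for all n. Assume: (i) for every α ∈ (0,1), lim_{m→∞} λ⁽ᵐ⁾_{⌊(1−α)m⌋} = 1; and (ii) for every real k > 0, lim_{m→∞} λ⁽ᵐ⁾_{⌊m + k·log₂(mπ/2)⌋} = 1/(1 + e^{kπ²}). Let N : ℕ → ℕ be such that there is a constant c > 0 with m ≤ N(m) ≤ m + c·log₂ m for all sufficiently large m. Then lim_{m→∞} (Π_{i=1}^{N(m)} λ⁽ᵐ⁾ᵢ)^{1/(2N(m))} = 1. -/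
/-!
Fix `α ∈ (0, 1)` and put `J = ⌊(1 - α) m⌋` and `M = ⌊m + c log₂ (mπ/2)⌋ ≥ N`. Since the
eigenvalues decrease, the first `J` factors of the product are at least `λ_J → 1` and the other
`N - J` factors are at least `λ_M → C = 1 / (1 + e^{cπ²}) > 0`. As `J / N → 1 - α`, the geometric
mean is eventually bounded below by a quantity tending to `C^{α/2}`. It is at most `1`, and
`C^{α/2} → 1` as `α → 0`.
-/

open Filter Finset Topology Real

theorem pow_card_le_prod_of_nonneg {ι R : Type*} [CommSemiring R] [PartialOrder R]
    [IsOrderedRing R] {s : Finset ι} {f : ι → R} {c : R} (hc : 0 ≤ c)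
    (h : ∀ i ∈ s, c ≤ f i) : c ^ #s ≤ ∏ i ∈ s, f i :=
  (prod_const c).symm.trans_le (prod_le_prod (fun _ _ => hc) h)

theorem pow_mul_pow_le_prod_Icc {R : Type*} [CommSemiring R] [PartialOrder R] [IsOrderedRing R]
    {f : ℕ → R} (hf : AntitoneOn f {i | 1 ≤ i}) (hf0 : ∀ i, 1 ≤ i → 0 ≤ f i) {J N M : ℕ}
    (hJ : 1 ≤ J) (hJN : J ≤ N) (hNM : N ≤ M) :
    f J ^ J * f M ^ (N - J) ≤ ∏ i ∈ Icc 1 N, f i := by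
  have hM : 1 ≤ M := hJ.trans (hJN.trans hNM)
  rw [show Icc 1 N = Ioc 0 N from Icc_add_one_left_eq_Ioc 0 N,
    ← prod_Ioc_consecutive f J.zero_le hJN]
  refine mul_le_mul ?_ ?_ (pow_nonneg (hf0 M hM) _)
    (prod_nonneg fun i hi => hf0 i (mem_Ioc.1 hi).1)
  · simpa using pow_card_le_prod_of_nonneg (s := Ioc 0 J) (f := f) (hf0 J hJ) fun i hi =>
      hf (mem_Ioc.1 hi).1 hJ (mem_Ioc.1 hi).2
  · simpa using pow_card_le_prod_of_nonneg (s := Ioc J N) (f := f) (hf0 M hM) fun i hi =>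
      hf (hJ.trans (mem_Ioc.1 hi).1.le) hM ((mem_Ioc.1 hi).2.trans hNM)

theorem rpow_mul_rpow_le_prod_Icc_rpow {f : ℕ → ℝ} (hf : AntitoneOn f {i | 1 ≤ i})
    (hf0 : ∀ i, 1 ≤ i → 0 ≤ f i) {J N M : ℕ} (hJ : 1 ≤ J) (hJN : J ≤ N) (hNM : N ≤ M)
    {s : ℝ} (hs : 0 ≤ s) :
    f J ^ (J * s) * f M ^ (((N : ℝ) - J) * s) ≤ (∏ i ∈ Icc 1 N, f i) ^ s := by
  have hJ0 := hf0 J hJ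
  have hM0 := hf0 M (hJ.trans (hJN.trans hNM))
  calc f J ^ (J * s) * f M ^ (((N : ℝ) - J) * s)
      = (f J ^ J * f M ^ (N - J)) ^ s := by
        rw [mul_rpow (by positivity) (by positivity), rpow_mul hJ0, rpow_mul hM0, rpow_natCast,
          ← Nat.cast_sub hJN, rpow_natCast]
    _ ≤ _ := rpow_le_rpow (by positivity) (pow_mul_pow_le_prod_Icc hf hf0 hJ hJN hNM) hs

theorem prod_Icc_rpow_le_one {f : ℕ → ℝ} (hf0 : ∀ i, 1 ≤ i → 0 ≤ f i)
    (hf1 : ∀ i, 1 ≤ i → f i ≤ 1) (N : ℕ) {s : ℝ} (hs : 0 ≤ s) :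
    (∏ i ∈ Icc 1 N, f i) ^ s ≤ 1 :=
  rpow_le_one (prod_nonneg fun i hi => hf0 i (mem_Icc.1 hi).1)
    (prod_le_one (fun i hi => hf0 i (mem_Icc.1 hi).1) fun i hi => hf1 i (mem_Icc.1 hi).1) hs

theorem tendsto_div_self_of_le_add_mul_logb {N : ℕ → ℕ} {b c : ℝ}
    (hN : ∀ᶠ m in atTop, m ≤ N m ∧ (N m : ℝ) ≤ m + c * logb b m) :
    Tendsto (fun m => (N m : ℝ) / m) atTop (𝓝 1) := by
  have hlog : Tendsto (fun x : ℝ => 1 + c * (logb b x / x)) atTop (𝓝 (1 + c * 0)) := by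
    simpa using (tendsto_pow_logb_div_mul_add_atTop (b := b) 1 0 1 one_ne_zero).const_mul c
      |>.const_add 1
  rw [mul_zero, add_zero] at hlog
  refine tendsto_of_tendsto_of_tendsto_of_le_of_le' tendsto_const_nhds
    (hlog.comp tendsto_natCast_atTop_atTop) ?_ ?_
  all_goals
    filter_upwards [hN, eventually_gt_atTop 0] with m hm hm0
    have hm0' : (0 : ℝ) < m := Nat.cast_pos.2 hm0
  · rw [le_div_iff₀ hm0', one_mul]; exact_mod_cast hm.1
  · rw [Function.comp_apply, div_le_iff₀ hm0']
    calc (N m : ℝ) ≤ m + c * logb b m := hm.2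
      _ = _ := by field_simp

theorem tendsto_nat_floor_mul_div_of_tendsto_div {N : ℕ → ℕ}
    (hN : Tendsto (fun m => (N m : ℝ) / m) atTop (𝓝 1)) {a : ℝ} (ha : 0 ≤ a) :
    Tendsto (fun m : ℕ => (⌊a * m⌋₊ : ℝ) / N m) atTop (𝓝 a) := by
  have hfloor := (tendsto_nat_floor_mul_div_atTop ha).comp tendsto_natCast_atTop_atTop
  refine (div_one a ▸ hfloor.div hN one_ne_zero).congr' ?_
  filter_upwards [eventually_gt_atTop 0] with m hm
  simp only [Pi.div_apply, Function.comp_apply]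
  exact div_div_div_cancel_right₀ (by positivity) _ _

theorem tendsto_rpow_mul_rpow_of_tendsto_div {ι : Type*} {l : Filter ι} {a b : ι → ℝ}
    {J N : ι → ℕ} {C r : ℝ} (ha : Tendsto a l (𝓝 1)) (hb : Tendsto b l (𝓝 C)) (hC : C ≠ 0)
    (hρ : Tendsto (fun i => (J i : ℝ) / N i) l (𝓝 r)) (hN : ∀ᶠ i in l, N i ≠ 0) :
    Tendsto (fun i => a i ^ ((J i : ℝ) * (1 / (2 * N i))) *
      b i ^ (((N i : ℝ) - J i) * (1 / (2 * N i)))) l (𝓝 (C ^ ((1 - r) / 2))) := by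
  have hexpJ : Tendsto (fun i => (J i : ℝ) * (1 / (2 * N i))) l (𝓝 (r / 2)) :=
    (hρ.div_const 2).congr fun i => by ring
  have hexpM : Tendsto (fun i => ((N i : ℝ) - J i) * (1 / (2 * N i))) l (𝓝 ((1 - r) / 2)) := by
    refine ((hρ.const_sub 1).div_const 2).congr' ?_
    filter_upwards [hN] with i hi
    have : (N i : ℝ) ≠ 0 := Nat.cast_ne_zero.2 hi
    field_simp
  simpa using (ha.rpow hexpJ (Or.inl one_ne_zero)).mul (hb.rpow hexpM (Or.inl hC))

theorem le_floor_add_mul_logb {b c x y : ℝ} {n : ℕ} (hb : 1 < b) (hc : 0 ≤ c) (hx : 0 < x)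
    (hxy : x ≤ y) (hn : (n : ℝ) ≤ x + c * logb b x) : n ≤ ⌊x + c * logb b y⌋₊ := by
  refine Nat.le_floor (hn.trans ?_)
  gcongr

theorem tendsto_one_of_le_one_of_forall_lower_bound {ι : Type*} {l : Filter ι} {u : ι → ℝ}
    {L : ℝ → ℝ} (hu : ∀ᶠ i in l, u i ≤ 1) (hL : Tendsto L (𝓝[>] 0) (𝓝 1))
    (hlow : ∀ α ∈ Set.Ioo (0 : ℝ) 1,
      ∃ v : ι → ℝ, Tendsto v l (𝓝 (L α)) ∧ ∀ᶠ i in l, v i ≤ u i) :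
    Tendsto u l (𝓝 1) := by
  refine tendsto_order.2 ⟨fun a ha => ?_, fun b hb => hu.mono fun i hi => hi.trans_lt hb⟩
  obtain ⟨α, hαa, hα⟩ :=
    ((hL.eventually (lt_mem_nhds ha)).and (Ioo_mem_nhdsGT one_pos)).exists
  obtain ⟨v, hv, hvu⟩ := hlow α hα
  filter_upwards [hv.eventually (lt_mem_nhds hαa), hvu] with i hi hvi using hi.trans_le hvi

/-- Lemma 1 of the paper: if for each `m` the nonincreasing sequence
`λ⁽ᵐ⁾ : {1,2,…} → (0,1]` undergoes the phase transition (i) and has transition width given by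
the Landau–Widom formula (ii), and `N(m) = m + O(log m)` with `N(m) ≥ m`, then the geometric
mean `ζ(N) = (Π_{i=1}^{N(m)} λ⁽ᵐ⁾ᵢ)^{1/(2N(m))}` tends to `1` as `m → ∞`. -/
theorem geometric_mean_eigenvalues_tendsto_one (lam : ℕ → ℕ → ℝ)
    (hmono : ∀ m, 1 ≤ m → ∀ n, 1 ≤ n → lam m (n + 1) ≤ lam m n)
    (hpos : ∀ m, 1 ≤ m → ∀ n, 1 ≤ n → 0 < lam m n)
    (hle : ∀ m, 1 ≤ m → ∀ n, 1 ≤ n → lam m n ≤ 1)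
    (hphase : ∀ α : ℝ, 0 < α → α < 1 →
      Tendsto (fun m : ℕ => lam m ⌊(1 - α) * (m : ℝ)⌋₊) atTop (nhds 1))
    (hwidth : ∀ k : ℝ, 0 < k →
      Tendsto (fun m : ℕ => lam m ⌊(m : ℝ) + k * Real.logb 2 ((m : ℝ) * Real.pi / 2)⌋₊)
        atTop (nhds (1 / (1 + Real.exp (k * Real.pi ^ 2)))))
    (N : ℕ → ℕ) (c : ℝ) (hc : 0 < c)
    (hN : ∀ᶠ m in atTop, m ≤ N m ∧ (N m : ℝ) ≤ (m : ℝ) + c * Real.logb 2 (m : ℝ)) :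
    Tendsto (fun m : ℕ =>
        (∏ i ∈ Finset.Icc 1 (N m), lam m i) ^ (1 / (2 * (N m : ℝ))))
      atTop (nhds 1) := by
  set C := 1 / (1 + exp (c * π ^ 2))
  have hC : 0 < C := by positivity
  have hL : Continuous fun α : ℝ => C ^ (α / 2) :=
    continuous_const.rpow (continuous_id.div_const 2) fun _ => Or.inl hC.ne'
  refine tendsto_one_of_le_one_of_forall_lower_bound ?_
    (by simpa using (hL.tendsto 0).mono_left nhdsWithin_le_nhds) fun α hα => ?_
  · filter_upwards [eventually_ge_atTop 1] with m hm using
      prod_Icc_rpow_le_one (fun i hi => (hpos m hm i hi).le) (hle m hm) _ (by positivity)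
  set J := fun m : ℕ => ⌊(1 - α) * m⌋₊
  set M := fun m : ℕ => ⌊m + c * logb 2 (m * π / 2)⌋₊
  have hρ : Tendsto (fun m => (J m : ℝ) / N m) atTop (𝓝 (1 - α)) :=
    tendsto_nat_floor_mul_div_of_tendsto_div (tendsto_div_self_of_le_add_mul_logb hN)
      (by linarith [hα.2])
  have hN0 : ∀ᶠ m in atTop, N m ≠ 0 := by
    filter_upwards [hN, eventually_gt_atTop 0] with m hNm hm using (hm.trans_le hNm.1).ne'
  have hJ : ∀ᶠ m in atTop, 1 ≤ J m :=
    (tendsto_nat_floor_mul_atTop _ (sub_pos.2 hα.2)).eventually_ge_atTop 1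
  refine ⟨_, sub_sub_cancel 1 α ▸ tendsto_rpow_mul_rpow_of_tendsto_div (hphase α hα.1 hα.2)
    (hwidth c hc) hC.ne' hρ hN0, ?_⟩
  filter_upwards [hN, hJ, eventually_ge_atTop 1] with m hNm hJm hm
  have hm0 : (0 : ℝ) < m := by exact_mod_cast hm
  have hJN : J m ≤ N m :=
    (Nat.floor_le_of_le (mul_le_of_le_one_left hm0.le (by linarith [hα.1]))).trans hNm.1
  have hNM : N m ≤ M m :=
    le_floor_add_mul_logb one_lt_two hc.le hm0 (by nlinarith [pi_gt_three]) hNm.2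
  exact rpow_mul_rpow_le_prod_Icc_rpow (antitoneOn_nat_Ici_of_succ_le (hmono m hm))
    (fun i hi => (hpos m hm i hi).le) hJm hJN hNM (by positivity)
end

section
/- Let E, ε > 0 with √E > ε, let R′ be a real number with 0 < R′ < log₂(√E/ε), let N ≥ 1 be an integer, and set M = ⌊2^{N·R′}⌋. Then there exist points a⁽¹⁾, …, a⁽ᴹ⁾ in the closed Euclidean ball of radius √E centered at the origin in ℝᴺ whose cumulative error measure satisfies Δ ≤ 2^{−N·(log₂(√E/ε) − R′)}. -/
/-!
Codewords are chosen greedily inside the ball `B` of radius `√E`. By Tonelli, the average over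
`c ∈ B` of `vol (closedBall c ε ∩ closedBall x ε)` is at most `vol(B_ε)² / vol B`, so the `k`-th
codeword can be placed so that its `ε`-ball meets the earlier ones in total volume at most
`k · vol(B_ε)² / vol B`. Every point of `Dⁱ` lies in `Sⁱ ∩ Sʲ` for some `j ≠ i`, hence
`M · Δ · vol(B_ε) ≤ M² · vol(B_ε)² / vol B`, that is `Δ ≤ M (ε/√E)ᴺ ≤ 2^{N R′} (ε/√E)ᴺ`.
-/

open Metric MeasureTheory

open scoped ENNReal

section Codebook

variable {V : Type*} [PseudoMetricSpace V] [MeasurableSpace V] (μ : Measure V) (ε : ℝ)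

noncomputable def totalOverlap {M : ℕ} (a : Fin M → V) : ℝ≥0∞ :=
  ∑ i, ∑ j with j ≠ i, μ (closedBall (a i) ε ∩ closedBall (a j) ε)

lemma totalOverlap_snoc {M : ℕ} (a : Fin M → V) (c : V) :
    totalOverlap μ ε (Fin.snoc a c : Fin (M + 1) → V) =
      totalOverlap μ ε a + 2 * ∑ j, μ (closedBall c ε ∩ closedBall (a j) ε) := by
  simp only [totalOverlap, Finset.sum_filter, Fin.sum_univ_castSucc, Fin.snoc_castSucc,
    Fin.snoc_last, ne_eq, Fin.castSucc_inj, Fin.castSucc_ne_last, (Fin.castSucc_ne_last _).symm,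
    not_false_eq_true, if_true, not_true_eq_false, if_false, add_zero, Finset.sum_add_distrib]
  simp_rw [Set.inter_comm (closedBall (a _) ε) (closedBall c ε)]
  ring

end Codebook

section AddHaar

variable {V : Type*} [NormedAddCommGroup V] [NormedSpace ℝ V] [MeasurableSpace V] [BorelSpace V]
  [FiniteDimensional ℝ V] (μ : Measure V) [μ.IsAddHaarMeasure]

lemma measurableSet_mem_inter_closedBall {A : Set V} (hA : MeasurableSet A) (ε : ℝ) :
    MeasurableSet {p : V × V | p.2 ∈ A ∩ closedBall p.1 ε} :=
  (measurable_snd hA).inter (isClosed_le (continuous_snd.dist continuous_fst)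
    continuous_const).measurableSet

lemma measurable_measure_inter_closedBall {A : Set V} (hA : MeasurableSet A) (ε : ℝ) :
    Measurable fun c => μ (A ∩ closedBall c ε) :=
  measurable_measure_prodMk_left (measurableSet_mem_inter_closedBall hA ε)

lemma lintegral_measure_inter_closedBall {A : Set V} (hA : MeasurableSet A) (ε : ℝ) :
    ∫⁻ c, μ (A ∩ closedBall c ε) ∂μ = μ A * μ (closedBall 0 ε) := by
  set P : Set (V × V) := {p | p.2 ∈ A ∩ closedBall p.1 ε}
  have hP : MeasurableSet P := measurableSet_mem_inter_closedBall hA ε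
  have slice (x : V) :
      μ ((fun c => (c, x)) ⁻¹' P) = A.indicator (fun _ => μ (closedBall 0 ε)) x := by
    by_cases hx : x ∈ A
    · have : (fun c => (c, x)) ⁻¹' P = closedBall x ε := by ext c; simp [P, hx, dist_comm]
      rw [this, Set.indicator_of_mem hx, Measure.addHaar_closedBall_center]
    · simp [P, hx]
  calc ∫⁻ c, μ (A ∩ closedBall c ε) ∂μ = μ.prod μ P := (Measure.prod_apply hP).symm
    _ = ∫⁻ x, A.indicator (fun _ => μ (closedBall 0 ε)) x ∂μ := by
        simp_rw [Measure.prod_apply_symm hP, slice]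
    _ = μ A * μ (closedBall 0 ε) := by rw [lintegral_indicator_const hA, mul_comm]

lemma exists_mem_sum_measure_inter_closedBall_le {ι : Type*} [Fintype ι] (g : ι → V)
    {S : Set V} (hS₀ : μ S ≠ 0) (hS : μ S ≠ ∞) (ε : ℝ) :
    ∃ c ∈ S, ∑ j, μ (closedBall c ε ∩ closedBall (g j) ε) ≤
      Fintype.card ι * (μ (closedBall 0 ε) ^ 2 / μ S) := by
  have hm (j : ι) : Measurable fun c => μ (closedBall (g j) ε ∩ closedBall c ε) :=
    measurable_measure_inter_closedBall μ measurableSet_closedBall ε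
  obtain ⟨c, hcS, hc⟩ :=
    exists_le_setLAverage hS₀ hS (Finset.measurable_sum _ fun j _ => hm j).aemeasurable
  refine ⟨c, hcS, ?_⟩
  calc ∑ j, μ (closedBall c ε ∩ closedBall (g j) ε)
      = ∑ j, μ (closedBall (g j) ε ∩ closedBall c ε) := by simp only [Set.inter_comm]
    _ ≤ (∫⁻ c in S, ∑ j, μ (closedBall (g j) ε ∩ closedBall c ε) ∂μ) / μ S := by
        rwa [← setLAverage_eq]
    _ ≤ (∫⁻ c, ∑ j, μ (closedBall (g j) ε ∩ closedBall c ε) ∂μ) / μ S := by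
        gcongr; exact Measure.restrict_le_self
    _ = Fintype.card ι * (μ (closedBall 0 ε) ^ 2 / μ S) := by
        simp only [lintegral_finsetSum _ fun j _ => hm j,
          lintegral_measure_inter_closedBall μ measurableSet_closedBall,
          Measure.addHaar_closedBall_center, Finset.sum_const, Finset.card_univ, nsmul_eq_mul,
          sq, mul_div_assoc]

lemma exists_totalOverlap_le {S : Set V} (hS₀ : μ S ≠ 0) (hS : μ S ≠ ∞) (ε : ℝ) (M : ℕ) :
    ∃ a : Fin M → V, (∀ i, a i ∈ S) ∧
      totalOverlap μ ε a ≤ M ^ 2 * (μ (closedBall 0 ε) ^ 2 / μ S) := by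
  induction M with
  | zero => exact ⟨Fin.elim0, fun i => i.elim0, by simp [totalOverlap]⟩
  | succ M ih =>
    obtain ⟨a, haS, ha⟩ := ih
    obtain ⟨c, hcS, hc⟩ := exists_mem_sum_measure_inter_closedBall_le μ a hS₀ hS ε
    refine ⟨Fin.snoc a c, fun i => ?_, ?_⟩
    · cases i using Fin.lastCases <;> simp [hcS, haS]
    rw [Fintype.card_fin] at hc
    calc totalOverlap μ ε (Fin.snoc a c : Fin (M + 1) → V)
        ≤ M ^ 2 * (μ (closedBall 0 ε) ^ 2 / μ S) + 2 * (M * (μ (closedBall 0 ε) ^ 2 / μ S)) := by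
          rw [totalOverlap_snoc]; gcongr
      _ = (M ^ 2 + 2 * M : ℕ) * (μ (closedBall 0 ε) ^ 2 / μ S) := by push_cast; ring
      _ ≤ (M + 1 : ℕ) ^ 2 * (μ (closedBall 0 ε) ^ 2 / μ S) := by
          gcongr; exact_mod_cast (by nlinarith : M ^ 2 + 2 * M ≤ (M + 1) ^ 2)

end AddHaar

section Euclidean

variable {N M : ℕ}

lemma volume_errRegion_le (ε : ℝ) (a : Fin M → EuclideanSpace ℝ (Fin N)) (i : Fin M) :
    volume (errRegion ε a i) ≤
      ∑ j with j ≠ i, volume (closedBall (a i) ε ∩ closedBall (a j) ε) := by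
  refine (measure_mono ?_).trans (measure_biUnion_finset_le _ _)
  rintro x ⟨hxi, j, hji, hdist⟩
  exact Set.mem_biUnion (by simpa using hji) ⟨hxi, mem_closedBall.2 (hdist.trans hxi)⟩

lemma volume_real_closedBall_div {ε ρ : ℝ} (hε : 0 ≤ ε) (hρ : 0 ≤ ρ) :
    volume.real (closedBall (0 : EuclideanSpace ℝ (Fin N)) ε) /
      volume.real (closedBall (0 : EuclideanSpace ℝ (Fin N)) ρ) = (ε / ρ) ^ N := by
  have hunit : volume.real (closedBall (0 : EuclideanSpace ℝ (Fin N)) 1) ≠ 0 :=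
    (ENNReal.toReal_pos (measure_closedBall_pos _ _ one_pos).ne' measure_closedBall_lt_top.ne).ne'
  rw [Measure.addHaar_real_closedBall' _ _ hε, Measure.addHaar_real_closedBall' _ _ hρ,
    finrank_euclideanSpace_fin, mul_div_mul_right _ _ hunit, div_pow]

lemma cumErr_eq (ε : ℝ) (a : Fin M → EuclideanSpace ℝ (Fin N)) :
    cumErr ε a = (∑ i, volume (errRegion ε a i)).toReal /
      (M * volume.real (closedBall (0 : EuclideanSpace ℝ (Fin N)) ε)) := by
  have hfin (i : Fin M) : volume (errRegion ε a i) ≠ ∞ :=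
    ((measure_mono fun _ hx => hx.1).trans_lt measure_closedBall_lt_top).ne
  simp only [cumErr, Measure.addHaar_closedBall_center, ← Finset.sum_div,
    ENNReal.toReal_sum fun i _ => hfin i, measureReal_def]
  ring

lemma cumErr_le_of_totalOverlap_le {ε ρ : ℝ} (hε : 0 < ε) (hρ : 0 < ρ)
    (a : Fin M → EuclideanSpace ℝ (Fin N))
    (h : totalOverlap volume ε a ≤ M ^ 2 * (volume (closedBall (0 : EuclideanSpace ℝ (Fin N)) ε) ^ 2
      / volume (closedBall (0 : EuclideanSpace ℝ (Fin N)) ρ))) :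
    cumErr ε a ≤ M * (ε / ρ) ^ N := by
  set vε := volume.real (closedBall (0 : EuclideanSpace ℝ (Fin N)) ε)
  set vρ := volume.real (closedBall (0 : EuclideanSpace ℝ (Fin N)) ρ)
  have hsum : (∑ i, volume (errRegion ε a i)).toReal ≤ M ^ 2 * (vε ^ 2 / vρ) := by
    have hbound := (Finset.sum_le_sum fun i _ => volume_errRegion_le ε a i).trans h
    have hfin : (M : ℝ≥0∞) ^ 2 * (volume (closedBall (0 : EuclideanSpace ℝ (Fin N)) ε) ^ 2
        / volume (closedBall (0 : EuclideanSpace ℝ (Fin N)) ρ)) ≠ ∞ :=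
      ENNReal.mul_ne_top (by simp) (ENNReal.div_ne_top (by simp [measure_closedBall_lt_top.ne])
        (measure_closedBall_pos _ _ hρ).ne')
    simpa [vε, vρ, measureReal_def] using ENNReal.toReal_mono hfin hbound
  rcases eq_or_ne (M : ℝ) 0 with hM | hM
  · simp [cumErr_eq, hM]
  have hvε : vε ≠ 0 :=
    (ENNReal.toReal_pos (measure_closedBall_pos _ _ hε).ne' measure_closedBall_lt_top.ne).ne'
  calc cumErr ε a ≤ M ^ 2 * (vε ^ 2 / vρ) / (M * vε) := by
        rw [cumErr_eq]; gcongr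
    _ = M * (vε / vρ) := by field_simp
    _ = M * (ε / ρ) ^ N := by rw [volume_real_closedBall_div hε.le hρ.le]

end Euclidean

theorem error_exponent_general (E ε : ℝ) (hE : 0 < E) (hε : 0 < ε) (R' : ℝ) (N : ℕ) :
    ∃ a : Fin ⌊(2 : ℝ) ^ ((N : ℝ) * R')⌋₊ → EuclideanSpace ℝ (Fin N),
      (∀ i, a i ∈ closedBall (0 : EuclideanSpace ℝ (Fin N)) (Real.sqrt E)) ∧
      cumErr ε a ≤ (2 : ℝ) ^ (-(N : ℝ) * (Real.logb 2 (Real.sqrt E / ε) - R')) := by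
  have hρ : 0 < Real.sqrt E := Real.sqrt_pos.2 hE
  obtain ⟨a, ha, hoverlap⟩ := exists_totalOverlap_le volume
    (measure_closedBall_pos volume (0 : EuclideanSpace ℝ (Fin N)) hρ).ne'
    measure_closedBall_lt_top.ne ε ⌊(2 : ℝ) ^ ((N : ℝ) * R')⌋₊
  refine ⟨a, ha, ?_⟩
  calc cumErr ε a ≤ ⌊(2 : ℝ) ^ ((N : ℝ) * R')⌋₊ * (ε / Real.sqrt E) ^ N :=
        cumErr_le_of_totalOverlap_le hε hρ a hoverlap
    _ ≤ (2 : ℝ) ^ ((N : ℝ) * R') * (ε / Real.sqrt E) ^ N := by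
        gcongr; exact Nat.floor_le (by positivity)
    _ = (2 : ℝ) ^ (-(N : ℝ) * (Real.logb 2 (Real.sqrt E / ε) - R')) := by
        rw [show -(N : ℝ) * (Real.logb 2 (Real.sqrt E / ε) - R') =
            N * R' - Real.logb 2 (Real.sqrt E / ε) * N by ring,
          Real.rpow_sub two_pos, Real.rpow_mul zero_le_two (Real.logb _ _),
          Real.rpow_logb two_pos (by norm_num) (by positivity), Real.rpow_natCast,
          div_eq_mul_inv _ ((_ / _) ^ N), ← inv_pow, inv_div]

/-- deterministic error exponent, Appendix C: for `√E > ε > 0`, any rate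
`0 < R′ < log₂(√E/ε)` and `M = ⌊2^{N·R′}⌋`, there is a codebook of `M` points in the closed
ball of radius `√E` in `ℝᴺ` with cumulative error measure
`Δ ≤ 2^{−N·(log₂(√E/ε) − R′)}`. -/
theorem error_exponent (E ε : ℝ) (hE : 0 < E) (hε : 0 < ε) (hEε : ε < Real.sqrt E)
    (R' : ℝ) (hR'pos : 0 < R') (hR' : R' < Real.logb 2 (Real.sqrt E / ε))
    (N : ℕ) (hN : 1 ≤ N) :
    ∃ a : Fin ⌊(2 : ℝ) ^ ((N : ℝ) * R')⌋₊ → EuclideanSpace ℝ (Fin N),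
      (∀ i, a i ∈ closedBall (0 : EuclideanSpace ℝ (Fin N)) (Real.sqrt E)) ∧
      cumErr ε a ≤ (2 : ℝ) ^ (-(N : ℝ) * (Real.logb 2 (Real.sqrt E / ε) - R')) :=
  error_exponent_general E ε hE hε R' N
end
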